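/- arXiv:2004.04454 — 2 statements merged into one kernel-verified Lean document; each statement's English description precedes it below -/
import Mathlib

section
/- Let S be a real symmetric p×p matrix with eigenvalues λ₁ ≥ λ₂ ≥ … ≥ λ_p (counted with multiplicity). Then for every real p×q matrix B with BᵀB = I_q, trace(Bᵀ S B) ≤ λ₁ + λ₂ + … + λ_q. -/
/-!
Diagonalise `S = U D Uᵀ` with `U` orthogonal and put `C = Uᵀ B`, which again has orthonormal
columns. Then `trace (Bᵀ S B) = ∑ᵢ λᵢ wᵢ` with weights `wᵢ = (C Cᵀ)ᵢᵢ`. These lie in `[0, 1]`,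
being diagonal entries of the orthogonal projection `C Cᵀ`, and sum to `trace (Cᵀ C) = q`.
Under these constraints a weighted sum of the nonincreasing `λᵢ` is largest when all the weight
sits on the first `q` indices, as one sees by comparing each `λᵢ` with a threshold `t` lying
between the first `q` eigenvalues and the others.
-/

open Matrix Finset

section Weights

variable {ι : Type*} [Fintype ι]

theorem sum_mul_le_sum_of_threshold (s : Finset ι) (f w : ι → ℝ) (t : ℝ)
    (hs : ∀ i ∈ s, t ≤ f i) (hsc : ∀ i ∉ s, f i ≤ t)
    (hw0 : ∀ i, 0 ≤ w i) (hw1 : ∀ i, w i ≤ 1) (hw : ∑ i, w i = #s) :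
    ∑ i, f i * w i ≤ ∑ i ∈ s, f i := by
  classical
  have hin : ∑ i ∈ s, (f i - t) * w i ≤ ∑ i ∈ s, (f i - t) :=
    sum_le_sum fun i hi => mul_le_of_le_one_right (sub_nonneg.2 (hs i hi)) (hw1 i)
  have hout : ∑ i ∈ sᶜ, (f i - t) * w i ≤ 0 :=
    sum_nonpos fun i hi =>
      mul_nonpos_of_nonpos_of_nonneg (sub_nonpos.2 (hsc i (mem_compl.1 hi))) (hw0 i)
  calc ∑ i, f i * w i = ∑ i, (f i - t) * w i + t * ∑ i, w i := by
        rw [mul_sum, ← sum_add_distrib]; congr! 1 with i; ring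
    _ ≤ ∑ i ∈ s, (f i - t) + t * #s := by
        rw [← sum_add_sum_compl s, hw]; linarith
    _ = ∑ i ∈ s, f i := by
        rw [sum_sub_distrib, sum_const, nsmul_eq_mul]; ring

theorem sum_mul_le_sum_of_forall_le (s : Finset ι) (f w : ι → ℝ)
    (hf : ∀ i ∈ s, ∀ j ∉ s, f j ≤ f i)
    (hw0 : ∀ i, 0 ≤ w i) (hw1 : ∀ i, w i ≤ 1) (hw : ∑ i, w i = #s) :
    ∑ i, f i * w i ≤ ∑ i ∈ s, f i := by
  rcases s.eq_empty_or_nonempty with rfl | hne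
  · have hw_zero : ∀ i, w i = 0 := by
      intro i
      exact (sum_eq_zero_iff_of_nonneg fun i _ => hw0 i).1 (by simpa using hw) i (mem_univ i)
    simp [hw_zero]
  · exact sum_mul_le_sum_of_threshold s f w (s.inf' hne f) (fun i hi => inf'_le f hi)
      (fun j hj => (le_inf'_iff hne f).2 fun i hi => hf i hi j hj) hw0 hw1 hw

theorem sum_mul_le_sum_castLE_of_antitone {p q : ℕ} (hq : q ≤ p) (f w : Fin p → ℝ)
    (hf : Antitone f) (hw0 : ∀ i, 0 ≤ w i) (hw1 : ∀ i, w i ≤ 1) (hw : ∑ i, w i = q) :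
    ∑ i, f i * w i ≤ ∑ j : Fin q, f (Fin.castLE hq j) := by
  have hmem : ∀ i, i ∈ univ.map (Fin.castLEEmb hq) ↔ (i : ℕ) < q := fun i => by
    simp [Fin.exists_iff, Fin.ext_iff]
  rw [← Fin.coe_castLEEmb hq, ← sum_map univ (Fin.castLEEmb hq)]
  refine sum_mul_le_sum_of_forall_le _ f w (fun i hi j hj => hf ?_) hw0 hw1 (by simpa using hw)
  rw [hmem] at hi hj
  exact Fin.le_def.2 (by omega)

end Weights

namespace Matrix

theorem diag_le_one_of_isSymm_of_isIdempotentElem {n : Type*} [Fintype n] {P : Matrix n n ℝ}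
    (hP : P.IsSymm) (hPP : IsIdempotentElem P) (i : n) : P i i ≤ 1 := by
  have hdiag : P i i = ∑ j, P i j ^ 2 := by
    conv_lhs => rw [← hPP.eq]
    simp only [mul_apply, hP.apply i, sq]
  have hsq : P i i ^ 2 ≤ P i i :=
    hdiag ▸ single_le_sum (f := fun j => P i j ^ 2) (fun j _ => sq_nonneg _) (mem_univ i)
  nlinarith

theorem mul_transpose_self_diag_nonneg {m n : Type*} [Fintype m] (C : Matrix n m ℝ) (i : n) :
    0 ≤ (C * Cᵀ) i i := by
  simp only [mul_apply, transpose_apply]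
  exact sum_nonneg fun j _ => mul_self_nonneg _

theorem mul_transpose_self_diag_le_one {m n : Type*} [Fintype m] [Fintype n] [DecidableEq m]
    {C : Matrix n m ℝ} (hC : Cᵀ * C = 1) (i : n) : (C * Cᵀ) i i ≤ 1 := by
  have hsymm : (C * Cᵀ).IsSymm := by rw [IsSymm, transpose_mul, transpose_transpose]
  refine diag_le_one_of_isSymm_of_isIdempotentElem hsymm ?_ i
  rw [IsIdempotentElem, Matrix.mul_assoc, ← Matrix.mul_assoc Cᵀ, hC, Matrix.one_mul]

theorem sum_mul_transpose_self_diag {m n : Type*} [Fintype m] [Fintype n] [DecidableEq m]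
    {C : Matrix n m ℝ} (hC : Cᵀ * C = 1) : ∑ i, (C * Cᵀ) i i = Fintype.card m := by
  rw [show ∑ i, (C * Cᵀ) i i = (C * Cᵀ).trace from rfl, trace_mul_comm, hC, trace_one]

theorem trace_transpose_mul_diagonal_mul {m n R : Type*} [Fintype m] [Fintype n] [DecidableEq n]
    [CommRing R] (C : Matrix n m R) (d : n → R) :
    (Cᵀ * diagonal d * C).trace = ∑ i, d i * (C * Cᵀ) i i := by
  rw [trace_mul_cycle, trace_mul_comm]
  simp [trace, diagonal_mul]

theorem transpose_mul_self_eq_one_of_mul_transpose_eq_one {m n : Type*} [Fintype n]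
    [DecidableEq n] [DecidableEq m] {U : Matrix n n ℝ} (hU : U * Uᵀ = 1) {B : Matrix n m ℝ}
    (hB : Bᵀ * B = 1) :
    (Uᵀ * B)ᵀ * (Uᵀ * B) = 1 := by
  rw [transpose_mul, transpose_transpose, Matrix.mul_assoc, ← Matrix.mul_assoc U, hU,
    Matrix.one_mul, hB]

namespace IsHermitian

variable {n : Type*} [Fintype n] [DecidableEq n] {S : Matrix n n ℝ}

theorem eigenvectorUnitary_mul_transpose (hS : S.IsHermitian) :
    (hS.eigenvectorUnitary : Matrix n n ℝ) * (hS.eigenvectorUnitary : Matrix n n ℝ)ᵀ = 1 := by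
  rw [← conjTranspose_eq_transpose_of_trivial, ← star_eq_conjTranspose]
  exact Unitary.mul_star_self_of_mem hS.eigenvectorUnitary.2

theorem eq_mul_diagonal_mul_transpose (hS : S.IsHermitian) :
    S = (hS.eigenvectorUnitary : Matrix n n ℝ) * diagonal hS.eigenvalues *
      (hS.eigenvectorUnitary : Matrix n n ℝ)ᵀ := by
  conv_lhs => rw [hS.spectral_theorem]
  rw [Unitary.conjStarAlgAut_apply, star_eq_conjTranspose, conjTranspose_eq_transpose_of_trivial]
  rfl

theorem trace_transpose_mul_mul {m : Type*} [Fintype m] (hS : S.IsHermitian) (B : Matrix n m ℝ) :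
    (Bᵀ * S * B).trace = ∑ i, hS.eigenvalues i *
      ((hS.eigenvectorUnitary : Matrix n n ℝ)ᵀ * B *
        ((hS.eigenvectorUnitary : Matrix n n ℝ)ᵀ * B)ᵀ) i i := by
  rw [← trace_transpose_mul_diagonal_mul]
  conv_lhs => rw [hS.eq_mul_diagonal_mul_transpose]
  simp only [transpose_mul, transpose_transpose, Matrix.mul_assoc]

end IsHermitian

end Matrix

/-- Ky Fan upper bound: for a real symmetric `S` with eigenvalues arranged in
nonincreasing order and any `B` with orthonormal columns,
`trace(Bᵀ S B) ≤ λ₁ + ⋯ + λ_q`. -/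
theorem stmt13 (p q : ℕ) (hq : q ≤ p) (S : Matrix (Fin p) (Fin p) ℝ)
    (hS : S.IsHermitian)
    (hmono : ∀ i j : Fin p, i ≤ j → hS.eigenvalues j ≤ hS.eigenvalues i)
    (B : Matrix (Fin p) (Fin q) ℝ) (hB : Bᵀ * B = 1) :
    (Bᵀ * S * B).trace ≤ ∑ j : Fin q, hS.eigenvalues (Fin.castLE hq j) := by
  have hC :=
    transpose_mul_self_eq_one_of_mul_transpose_eq_one hS.eigenvectorUnitary_mul_transpose hB
  rw [hS.trace_transpose_mul_mul B]
  refine sum_mul_le_sum_castLE_of_antitone hq _ _ (fun i j hij => hmono i j hij)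
    (mul_transpose_self_diag_nonneg _) (mul_transpose_self_diag_le_one hC) ?_
  rw [sum_mul_transpose_self_diag hC, Fintype.card_fin]
end

section
/- Let X₁,…,Xₙ be 3-tensors of size p₁×p₂×p₃, let X̄ := (1/n) Σᵢ Xᵢ be their mean, and let U_k be real p_k×q_k matrices with U_kᵀU_k = I_{q_k} (k = 1,2,3). Define Zᵢ := (Xᵢ − X̄) ×₁ U₁ᵀ ×₂ U₂ᵀ ×₃ U₃ᵀ and X̃ᵢ := Zᵢ ×₁ U₁ ×₂ U₂ ×₃ U₃ + X̄. Then Σᵢ₌₁ⁿ ‖Xᵢ − X̃ᵢ‖²_F = Σᵢ₌₁ⁿ ‖Xᵢ − X̄‖²_F − Σᵢ₌₁ⁿ ‖Zᵢ‖²_F; in particular, maximizing Σᵢ ‖Zᵢ‖²_F over the orthogonal matrices U₁, U₂, U₃ is equivalent to minimizing the reconstruction error Σᵢ ‖Xᵢ − X̃ᵢ‖²_F. -/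
open Matrix

/-- Mode-1 product of a 3-tensor with a matrix. -/
def mode1 {p₁ p₂ p₃ q : ℕ} (A : Matrix (Fin q) (Fin p₁) ℝ)
    (X : Fin p₁ × Fin p₂ × Fin p₃ → ℝ) : Fin q × Fin p₂ × Fin p₃ → ℝ :=
  fun t => ∑ i₁, A t.1 i₁ * X (i₁, t.2.1, t.2.2)

/-- Mode-2 product of a 3-tensor with a matrix. -/
def mode2 {p₁ p₂ p₃ q : ℕ} (A : Matrix (Fin q) (Fin p₂) ℝ)
    (X : Fin p₁ × Fin p₂ × Fin p₃ → ℝ) : Fin p₁ × Fin q × Fin p₃ → ℝ :=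
  fun t => ∑ i₂, A t.2.1 i₂ * X (t.1, i₂, t.2.2)

/-- Mode-3 product of a 3-tensor with a matrix. -/
def mode3 {p₁ p₂ p₃ q : ℕ} (A : Matrix (Fin q) (Fin p₃) ℝ)
    (X : Fin p₁ × Fin p₂ × Fin p₃ → ℝ) : Fin p₁ × Fin p₂ × Fin q → ℝ :=
  fun t => ∑ i₃, A t.2.2 i₃ * X (t.1, t.2.1, i₃)

/-- Squared Frobenius norm of a 3-tensor. -/
def frobSq {a b c : ℕ} (X : Fin a × Fin b × Fin c → ℝ) : ℝ :=
  ∑ t, (X t) ^ 2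

/-!
Flattening a 3-tensor to a vector indexed by `Fin p₁ × Fin p₂ × Fin p₃`, the map
`X ↦ X ×₁ A ×₂ B ×₃ C` is multiplication by the Kronecker product `A ⊗ B ⊗ C`. For
`P := U₁ ⊗ U₂ ⊗ U₃` we get `PᵀP = I`, `Zᵢ = Pᵀ Yᵢ` and `X̃ᵢ - X̄ = P Pᵀ Yᵢ` with `Yᵢ := Xᵢ - X̄`,
so `Yᵢ - P Pᵀ Yᵢ` is the residual of an orthogonal projection and Pythagoras gives
`‖Yᵢ - P Pᵀ Yᵢ‖² = ‖Yᵢ‖² - ‖Pᵀ Yᵢ‖²`. Summing over `i` gives the identity, and since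
`Σᵢ ‖Yᵢ‖²` does not depend on the `Uₖ`, the two optimization problems are equivalent.
-/

open scoped Kronecker

section ModeProduct

variable {p₁ p₂ p₃ q₁ q₂ q₃ : ℕ}

theorem mode1_eq_kronecker_mulVec (A : Matrix (Fin q₁) (Fin p₁) ℝ)
    (X : Fin p₁ × Fin p₂ × Fin p₃ → ℝ) :
    mode1 A X = (A ⊗ₖ (1 : Matrix (Fin p₂ × Fin p₃) (Fin p₂ × Fin p₃) ℝ)) *ᵥ X := by
  ext ⟨j, y⟩
  simp [mode1, mulVec, dotProduct, Fintype.sum_prod_type, one_apply]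

theorem mode2_eq_kronecker_mulVec (A : Matrix (Fin q₂) (Fin p₂) ℝ)
    (X : Fin p₁ × Fin p₂ × Fin p₃ → ℝ) :
    mode2 A X = ((1 : Matrix (Fin p₁) (Fin p₁) ℝ) ⊗ₖ
      (A ⊗ₖ (1 : Matrix (Fin p₃) (Fin p₃) ℝ))) *ᵥ X := by
  ext ⟨i, j, k⟩
  simp [mode2, mulVec, dotProduct, Fintype.sum_prod_type, one_apply]

theorem mode3_eq_kronecker_mulVec (A : Matrix (Fin q₃) (Fin p₃) ℝ)
    (X : Fin p₁ × Fin p₂ × Fin p₃ → ℝ) :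
    mode3 A X = ((1 : Matrix (Fin p₁) (Fin p₁) ℝ) ⊗ₖ
      ((1 : Matrix (Fin p₂) (Fin p₂) ℝ) ⊗ₖ A)) *ᵥ X := by
  ext ⟨i, j, k⟩
  simp [mode3, mulVec, dotProduct, Fintype.sum_prod_type, one_apply]

theorem mode3_mode2_mode1_eq_kronecker_mulVec (A : Matrix (Fin q₁) (Fin p₁) ℝ)
    (B : Matrix (Fin q₂) (Fin p₂) ℝ) (C : Matrix (Fin q₃) (Fin p₃) ℝ)
    (X : Fin p₁ × Fin p₂ × Fin p₃ → ℝ) :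
    mode3 C (mode2 B (mode1 A X)) = (A ⊗ₖ (B ⊗ₖ C)) *ᵥ X := by
  rw [mode1_eq_kronecker_mulVec, mode2_eq_kronecker_mulVec, mode3_eq_kronecker_mulVec,
    mulVec_mulVec, mulVec_mulVec, ← one_kronecker_one]
  simp only [← mul_kronecker_mul, Matrix.one_mul, Matrix.mul_one]

end ModeProduct

theorem dotProduct_self_sub_mulVec_transpose_mulVec {m n R : Type*} [Fintype m] [Fintype n]
    [DecidableEq n] [CommRing R] (P : Matrix m n R) (hP : Pᵀ * P = 1) (y : m → R) :
    (y - P *ᵥ Pᵀ *ᵥ y) ⬝ᵥ (y - P *ᵥ Pᵀ *ᵥ y) = y ⬝ᵥ y - (Pᵀ *ᵥ y) ⬝ᵥ (Pᵀ *ᵥ y) := by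
  set z := Pᵀ *ᵥ y
  have hcross : y ⬝ᵥ P *ᵥ z = z ⬝ᵥ z := by
    rw [dotProduct_mulVec, ← mulVec_transpose]
  have hnorm : P *ᵥ z ⬝ᵥ P *ᵥ z = z ⬝ᵥ z := by
    rw [dotProduct_mulVec, ← mulVec_transpose, mulVec_mulVec, hP, one_mulVec, dotProduct_comm]
  rw [sub_dotProduct, dotProduct_sub, dotProduct_sub, dotProduct_comm (P *ᵥ z), hcross, hnorm]
  ring

theorem kronecker_transpose_mul_self {l m n p R : Type*} [Fintype l] [Fintype n]
    [DecidableEq m] [DecidableEq p] [CommRing R] {A : Matrix l m R} {B : Matrix n p R}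
    (hA : Aᵀ * A = 1) (hB : Bᵀ * B = 1) : (A ⊗ₖ B)ᵀ * (A ⊗ₖ B) = 1 := by
  rw [← kroneckerMap_transpose, ← mul_kronecker_mul, hA, hB, one_kronecker_one]

theorem frobSq_eq_dotProduct {p₁ p₂ p₃ : ℕ} (X : Fin p₁ × Fin p₂ × Fin p₃ → ℝ) :
    frobSq X = X ⬝ᵥ X := by
  simp only [frobSq, dotProduct, sq]

theorem frobSq_sub_reconstruction {p₁ p₂ p₃ q₁ q₂ q₃ : ℕ}
    {U₁ : Matrix (Fin p₁) (Fin q₁) ℝ} {U₂ : Matrix (Fin p₂) (Fin q₂) ℝ}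
    {U₃ : Matrix (Fin p₃) (Fin q₃) ℝ}
    (hU₁ : U₁ᵀ * U₁ = 1) (hU₂ : U₂ᵀ * U₂ = 1) (hU₃ : U₃ᵀ * U₃ = 1)
    (Y : Fin p₁ × Fin p₂ × Fin p₃ → ℝ) :
    frobSq (Y - mode3 U₃ (mode2 U₂ (mode1 U₁ (mode3 U₃ᵀ (mode2 U₂ᵀ (mode1 U₁ᵀ Y))))))
      = frobSq Y - frobSq (mode3 U₃ᵀ (mode2 U₂ᵀ (mode1 U₁ᵀ Y))) := by
  have hU : (U₁ ⊗ₖ (U₂ ⊗ₖ U₃))ᵀ * (U₁ ⊗ₖ (U₂ ⊗ₖ U₃)) = 1 :=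
    kronecker_transpose_mul_self hU₁ (kronecker_transpose_mul_self hU₂ hU₃)
  simp only [mode3_mode2_mode1_eq_kronecker_mulVec, frobSq_eq_dotProduct]
  rw [kroneckerMap_transpose, kroneckerMap_transpose]
  exact dotProduct_self_sub_mulVec_transpose_mulVec _ hU Y

theorem sum_frobSq_sub_reconstruction {n p₁ p₂ p₃ q₁ q₂ q₃ : ℕ}
    (X : Fin n → (Fin p₁ × Fin p₂ × Fin p₃ → ℝ)) (Xbar : Fin p₁ × Fin p₂ × Fin p₃ → ℝ)
    {U₁ : Matrix (Fin p₁) (Fin q₁) ℝ} {U₂ : Matrix (Fin p₂) (Fin q₂) ℝ}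
    {U₃ : Matrix (Fin p₃) (Fin q₃) ℝ}
    (hU₁ : U₁ᵀ * U₁ = 1) (hU₂ : U₂ᵀ * U₂ = 1) (hU₃ : U₃ᵀ * U₃ = 1)
    {Z : Fin n → (Fin q₁ × Fin q₂ × Fin q₃ → ℝ)}
    (hZ : ∀ i, Z i = mode3 U₃ᵀ (mode2 U₂ᵀ (mode1 U₁ᵀ (X i - Xbar))))
    {Xt : Fin n → (Fin p₁ × Fin p₂ × Fin p₃ → ℝ)}
    (hXt : ∀ i, Xt i = mode3 U₃ (mode2 U₂ (mode1 U₁ (Z i))) + Xbar) :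
    ∑ i, frobSq (X i - Xt i) = ∑ i, frobSq (X i - Xbar) - ∑ i, frobSq (Z i) := by
  rw [← Finset.sum_sub_distrib]
  refine Finset.sum_congr rfl fun i _ => ?_
  rw [hXt i, hZ i, sub_add_eq_sub_sub_swap, frobSq_sub_reconstruction hU₁ hU₂ hU₃]

theorem stmt15_general (n p₁ p₂ p₃ q₁ q₂ q₃ : ℕ)
    (X : Fin n → (Fin p₁ × Fin p₂ × Fin p₃ → ℝ))
    (Xbar : Fin p₁ × Fin p₂ × Fin p₃ → ℝ)
    (U₁ : Matrix (Fin p₁) (Fin q₁) ℝ) (U₂ : Matrix (Fin p₂) (Fin q₂) ℝ)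
    (U₃ : Matrix (Fin p₃) (Fin q₃) ℝ)
    (hU₁ : U₁ᵀ * U₁ = 1) (hU₂ : U₂ᵀ * U₂ = 1) (hU₃ : U₃ᵀ * U₃ = 1)
    (Z : Fin n → (Fin q₁ × Fin q₂ × Fin q₃ → ℝ))
    (hZ : ∀ i, Z i = mode3 U₃ᵀ (mode2 U₂ᵀ (mode1 U₁ᵀ (X i - Xbar))))
    (Xt : Fin n → (Fin p₁ × Fin p₂ × Fin p₃ → ℝ))
    (hXt : ∀ i, Xt i = mode3 U₃ (mode2 U₂ (mode1 U₁ (Z i))) + Xbar) :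
    (∑ i, frobSq (X i - Xt i) = ∑ i, frobSq (X i - Xbar) - ∑ i, frobSq (Z i)) ∧
      (∀ (V₁ : Matrix (Fin p₁) (Fin q₁) ℝ) (V₂ : Matrix (Fin p₂) (Fin q₂) ℝ)
          (V₃ : Matrix (Fin p₃) (Fin q₃) ℝ),
        V₁ᵀ * V₁ = 1 → V₂ᵀ * V₂ = 1 → V₃ᵀ * V₃ = 1 →
        ∀ (Z' : Fin n → (Fin q₁ × Fin q₂ × Fin q₃ → ℝ)),
          (∀ i, Z' i = mode3 V₃ᵀ (mode2 V₂ᵀ (mode1 V₁ᵀ (X i - Xbar)))) →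
          ∀ (Xt' : Fin n → (Fin p₁ × Fin p₂ × Fin p₃ → ℝ)),
            (∀ i, Xt' i = mode3 V₃ (mode2 V₂ (mode1 V₁ (Z' i))) + Xbar) →
            ((∑ i, frobSq (Z' i) ≤ ∑ i, frobSq (Z i)) ↔
              (∑ i, frobSq (X i - Xt i) ≤ ∑ i, frobSq (X i - Xt' i)))) := by
  have hrecon := sum_frobSq_sub_reconstruction X Xbar hU₁ hU₂ hU₃ hZ hXt
  refine ⟨hrecon, fun V₁ V₂ V₃ hV₁ hV₂ hV₃ Z' hZ' Xt' hXt' => ?_⟩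
  rw [hrecon, sum_frobSq_sub_reconstruction X Xbar hV₁ hV₂ hV₃ hZ' hXt']
  exact (sub_le_sub_iff_left _).symm

/-- The MPCA identity `Σᵢ ‖Xᵢ − X̃ᵢ‖²_F = Σᵢ ‖Xᵢ − X̄‖²_F − Σᵢ ‖Zᵢ‖²_F`, where
`Zᵢ := (Xᵢ − X̄) ×₁ U₁ᵀ ×₂ U₂ᵀ ×₃ U₃ᵀ` and `X̃ᵢ := Zᵢ ×₁ U₁ ×₂ U₂ ×₃ U₃ + X̄`; in
particular, maximizing `Σᵢ ‖Zᵢ‖²_F` over triples of orthogonal matrices is the same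
as minimizing the reconstruction error `Σᵢ ‖Xᵢ − X̃ᵢ‖²_F`. -/
theorem stmt15 (n p₁ p₂ p₃ q₁ q₂ q₃ : ℕ)
    (X : Fin n → (Fin p₁ × Fin p₂ × Fin p₃ → ℝ))
    (Xbar : Fin p₁ × Fin p₂ × Fin p₃ → ℝ) (hXbar : Xbar = (n : ℝ)⁻¹ • ∑ i, X i)
    (U₁ : Matrix (Fin p₁) (Fin q₁) ℝ) (U₂ : Matrix (Fin p₂) (Fin q₂) ℝ)
    (U₃ : Matrix (Fin p₃) (Fin q₃) ℝ)
    (hU₁ : U₁ᵀ * U₁ = 1) (hU₂ : U₂ᵀ * U₂ = 1) (hU₃ : U₃ᵀ * U₃ = 1)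
    (Z : Fin n → (Fin q₁ × Fin q₂ × Fin q₃ → ℝ))
    (hZ : ∀ i, Z i = mode3 U₃ᵀ (mode2 U₂ᵀ (mode1 U₁ᵀ (X i - Xbar))))
    (Xt : Fin n → (Fin p₁ × Fin p₂ × Fin p₃ → ℝ))
    (hXt : ∀ i, Xt i = mode3 U₃ (mode2 U₂ (mode1 U₁ (Z i))) + Xbar) :
    (∑ i, frobSq (X i - Xt i) = ∑ i, frobSq (X i - Xbar) - ∑ i, frobSq (Z i)) ∧
      (∀ (V₁ : Matrix (Fin p₁) (Fin q₁) ℝ) (V₂ : Matrix (Fin p₂) (Fin q₂) ℝ)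
          (V₃ : Matrix (Fin p₃) (Fin q₃) ℝ),
        V₁ᵀ * V₁ = 1 → V₂ᵀ * V₂ = 1 → V₃ᵀ * V₃ = 1 →
        ∀ (Z' : Fin n → (Fin q₁ × Fin q₂ × Fin q₃ → ℝ)),
          (∀ i, Z' i = mode3 V₃ᵀ (mode2 V₂ᵀ (mode1 V₁ᵀ (X i - Xbar)))) →
          ∀ (Xt' : Fin n → (Fin p₁ × Fin p₂ × Fin p₃ → ℝ)),
            (∀ i, Xt' i = mode3 V₃ (mode2 V₂ (mode1 V₁ (Z' i))) + Xbar) →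
            ((∑ i, frobSq (Z' i) ≤ ∑ i, frobSq (Z i)) ↔
              (∑ i, frobSq (X i - Xt i) ≤ ∑ i, frobSq (X i - Xt' i)))) :=
  stmt15_general n p₁ p₂ p₃ q₁ q₂ q₃ X Xbar U₁ U₂ U₃ hU₁ hU₂ hU₃ Z hZ Xt hXt
end
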